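/- Let H be a Hopf algebra with nonzero left integral ∫ and V a right H-comodule. Then h ∘ v := v₀ ∫(h S(v₁)) defines a left module structure on V over the convolution algebra (H,*), i.e., g ∘ (h ∘ v) = (g*h) ∘ v for all g, h ∈ H and v ∈ V. -/

import Mathlib

open TensorProduct LinearMap

set_option maxHeartbeats 1000000
set_option synthInstance.maxHeartbeats 400000

noncomputable section

variable (k : Type*) [Field k] (H : Type*) [Ring H] [HopfAlgebra k H]

/-- `∫` is a left integral on `H`: `a₁ ∫(a₂) = ∫(a) 1` for all `a`. -/
def IsLeftIntegral (I : H →ₗ[k] k) : Prop :=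
  ∀ a : H, TensorProduct.rid k H (LinearMap.lTensor H I (Coalgebra.comul a)) = I a • (1 : H)

/-- `∫` is a right integral on `H`: `∫(a₁) a₂ = ∫(a) 1` for all `a`. -/
def IsRightIntegral (I : H →ₗ[k] k) : Prop :=
  ∀ a : H, TensorProduct.lid k H (LinearMap.rTensor H I (Coalgebra.comul a)) = I a • (1 : H)

/-- The linear map `h ⊗ g ↦ ∫(h S(g))`. -/
def intPair (I : H →ₗ[k] k) : H ⊗[k] H →ₗ[k] k :=
  I ∘ₗ LinearMap.mul' k H ∘ₗ LinearMap.lTensor H (HopfAlgebra.antipode (R := k))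

/-- The linear map `g ⊗ h ↦ h₁ ∫(h₂ S(g))` (the convolution product). -/
def convMap (I : H →ₗ[k] k) : H ⊗[k] H →ₗ[k] H :=
  (TensorProduct.rid k H).toLinearMap
    ∘ₗ LinearMap.lTensor H (intPair k H I)
    ∘ₗ (TensorProduct.assoc k H H H).toLinearMap
    ∘ₗ (Coalgebra.comul (R := k)).rTensor H
    ∘ₗ (TensorProduct.comm k H H).toLinearMap

/-- The convolution product `g * h := h₁ ∫(h₂ S(g))`. -/
def convProd (I : H →ₗ[k] k) (g h : H) : H := convMap k H I (g ⊗ₜ h)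

/-- The linear map `g ⊗ h ↦ ∫(h S(g₁)) g₂`. -/
def convMap' (I : H →ₗ[k] k) : H ⊗[k] H →ₗ[k] H :=
  (TensorProduct.lid k H).toLinearMap
    ∘ₗ (intPair k H I).rTensor H
    ∘ₗ (TensorProduct.assoc k H H H).symm.toLinearMap
    ∘ₗ LinearMap.lTensor H (Coalgebra.comul (R := k))
    ∘ₗ (TensorProduct.comm k H H).toLinearMap

variable (M : Type*) [AddCommGroup M] [Module k M]

/-- The action `h ∘ v := v₀ ∫(h S(v₁))` on a right `H`-comodule. -/
def convActOp (I : H →ₗ[k] k) (ρ : M →ₗ[k] M ⊗[k] H) (h : H) : M →ₗ[k] M :=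
  (TensorProduct.rid k M).toLinearMap
    ∘ₗ LinearMap.lTensor M (I ∘ₗ LinearMap.mulLeft k h ∘ₗ HopfAlgebra.antipode (R := k))
    ∘ₗ ρ

/-- `ρ` is a (counital, coassociative) right comodule coaction. -/
def IsCoact (ρ : M →ₗ[k] M ⊗[k] H) : Prop :=
  ((TensorProduct.assoc k M H H).toLinearMap ∘ₗ ρ.rTensor H ∘ₗ ρ
      = (LinearMap.lTensor M (Coalgebra.comul (R := k))) ∘ₗ ρ) ∧
  ((TensorProduct.rid k M).toLinearMap ∘ₗ LinearMap.lTensor M (Coalgebra.counit (R := k)) ∘ₗ ρ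
      = LinearMap.id)

/-! ### Auxiliary convolution-algebra framework -/

section ConvFramework

open Coalgebra HopfAlgebra

variable {R : Type*} [CommSemiring R]
variable {C : Type*} [AddCommMonoid C] [Module R C] [Coalgebra R C]
variable {A : Type*} [Semiring A] [Algebra R A]

/-- Convolution product of linear maps from a coalgebra to an algebra. -/
def cv (f g : C →ₗ[R] A) : C →ₗ[R] A :=
  LinearMap.mul' R A ∘ₗ TensorProduct.map f g ∘ₗ Coalgebra.comul

lemma cv_apply (f g : C →ₗ[R] A) (c : C) {ι : Type*} (r : Coalgebra.Repr R c ι) :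
    cv f g c = ∑ i ∈ r.index, f (r.left i) * g (r.right i) := by
  simp only [cv, LinearMap.coe_comp, Function.comp_apply, ← r.eq, map_sum,
    TensorProduct.map_tmul, LinearMap.mul'_apply]

/-- The convolution unit. -/
def cu : C →ₗ[R] A := Algebra.linearMap R A ∘ₗ Coalgebra.counit

lemma cu_apply (c : C) : (cu (R := R) (A := A)) c = Coalgebra.counit (R := R) c • (1 : A) := by
  simp [cu, Algebra.smul_def]

lemma sum_counit_smul_left {c : C} {ι : Type*} (r : Coalgebra.Repr R c ι) :
    ∑ i ∈ r.index, Coalgebra.counit (R := R) (r.left i) • r.right i = c := by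
  have := congrArg (TensorProduct.lid R C) (Coalgebra.sum_counit_tmul_eq r)
  rw [map_sum] at this
  simp only [TensorProduct.lid_tmul] at this
  simpa using this

lemma sum_counit_smul_right {c : C} {ι : Type*} (r : Coalgebra.Repr R c ι) :
    ∑ i ∈ r.index, Coalgebra.counit (R := R) (r.right i) • r.left i = c := by
  have := congrArg (TensorProduct.rid R C) (Coalgebra.sum_tmul_counit_eq r)
  rw [map_sum] at this
  simp only [TensorProduct.rid_tmul] at this
  simpa using this

lemma cv_cu_left (f : C →ₗ[R] A) : cv cu f = f := by
  refine LinearMap.ext fun c => ?_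
  have r := Coalgebra.Repr.arbitrary R c
  rw [cv_apply _ _ c r]
  calc ∑ i ∈ r.index, cu (r.left i) * f (r.right i)
      = ∑ i ∈ r.index, f (Coalgebra.counit (R := R) (r.left i) • r.right i) := by
        refine Finset.sum_congr rfl fun i _ => ?_
        rw [cu_apply, map_smul, smul_mul_assoc, one_mul]
    _ = f c := by rw [← map_sum, sum_counit_smul_left]

lemma cv_cu_right (f : C →ₗ[R] A) : cv f cu = f := by
  refine LinearMap.ext fun c => ?_
  have r := Coalgebra.Repr.arbitrary R c
  rw [cv_apply _ _ c r]
  calc ∑ i ∈ r.index, f (r.left i) * cu (r.right i)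
      = ∑ i ∈ r.index, f (Coalgebra.counit (R := R) (r.right i) • r.left i) := by
        refine Finset.sum_congr rfl fun i _ => ?_
        rw [cu_apply, map_smul, mul_smul_comm, mul_one]
    _ = f c := by rw [← map_sum, sum_counit_smul_right]

lemma cv_assoc (f g h : C →ₗ[R] A) : cv (cv f g) h = cv f (cv g h) := by
  refine LinearMap.ext fun c => ?_
  have r := Coalgebra.Repr.arbitrary R c
  have r1 : ∀ i : C × C, Coalgebra.Repr R (r.left i) (C × C) := fun i => Coalgebra.Repr.arbitrary R _
  have r2 : ∀ i : C × C, Coalgebra.Repr R (r.right i) (C × C) := fun i => Coalgebra.Repr.arbitrary R _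
  rw [cv_apply _ _ c r, cv_apply _ _ c r]
  have key := Coalgebra.sum_map_tmul_tmul_eq f g h c (repr := r) (a₁ := r1) (a₂ := r2)
  have := congrArg (LinearMap.mul' R A ∘ₗ LinearMap.lTensor A (LinearMap.mul' R A)) key
  simp only [map_sum, LinearMap.coe_comp, Function.comp_apply, LinearMap.lTensor_tmul,
    LinearMap.mul'_apply] at this
  calc ∑ i ∈ r.index, cv f g (r.left i) * h (r.right i)
      = ∑ i ∈ r.index, ∑ j ∈ (r1 i).index,
          f ((r1 i).left j) * (g ((r1 i).right j) * h (r.right i)) := by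
        refine Finset.sum_congr rfl fun i _ => ?_
        rw [cv_apply _ _ _ (r1 i), Finset.sum_mul]
        simp [mul_assoc]
    _ = ∑ i ∈ r.index, ∑ j ∈ (r2 i).index,
          f (r.left i) * (g ((r2 i).left j) * h ((r2 i).right j)) := this.symm
    _ = ∑ i ∈ r.index, f (r.left i) * cv g h (r.right i) := by
        refine Finset.sum_congr rfl fun i _ => ?_
        rw [cv_apply _ _ _ (r2 i), Finset.mul_sum]

lemma cv_alghom {A' : Type*} [Semiring A'] [Algebra R A'] (θ : A →ₐ[R] A')
    (f g : C →ₗ[R] A) :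
    θ.toLinearMap ∘ₗ cv f g = cv (θ.toLinearMap ∘ₗ f) (θ.toLinearMap ∘ₗ g) := by
  refine LinearMap.ext fun c => ?_
  have r := Coalgebra.Repr.arbitrary R c
  simp only [LinearMap.coe_comp, Function.comp_apply, AlgHom.toLinearMap_apply]
  rw [cv_apply _ _ c r, cv_apply _ _ c r, map_sum]
  exact Finset.sum_congr rfl fun i _ => map_mul θ _ _

end ConvFramework

/-! ### Hopf-algebra lemmas -/

section HopfLemmas

open Coalgebra HopfAlgebra

variable {k H}

local notation "𝑺" => HopfAlgebra.antipode (R := k) (A := H)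

lemma cv_id_antipode : cv (LinearMap.id (M := H)) 𝑺 = cu (R := k) := by
  unfold cv cu
  rw [← HopfAlgebra.mul_antipode_lTensor_comul (R := k) (A := H)]
  rfl

/-- The antipode is an anti-morphism of coalgebras. -/
lemma comul_antipode :
    Coalgebra.comul (R := k) ∘ₗ 𝑺 =
      TensorProduct.map 𝑺 𝑺 ∘ₗ (TensorProduct.comm k H H).toLinearMap
        ∘ₗ Coalgebra.comul := by
  set Δ : H →ₗ[k] H ⊗[k] H := Coalgebra.comul
  set F : H →ₗ[k] H ⊗[k] H := Coalgebra.comul ∘ₗ 𝑺 with hF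
  set G : H →ₗ[k] H ⊗[k] H :=
    TensorProduct.map 𝑺 𝑺 ∘ₗ (TensorProduct.comm k H H).toLinearMap ∘ₗ Coalgebra.comul with hG
  set ι₁ : H →ₗ[k] H ⊗[k] H := (Algebra.TensorProduct.includeLeft (R := k) (S := k)).toLinearMap
    with hι₁
  set ι₂ : H →ₗ[k] H ⊗[k] H := (Algebra.TensorProduct.includeRight (R := k)).toLinearMap with hι₂
  have hΔ : Δ = cv ι₁ ι₂ := by
    refine LinearMap.ext fun a => ?_
    have r := Coalgebra.Repr.arbitrary k a
    rw [cv_apply _ _ a r]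
    simp only [hι₁, hι₂, AlgHom.toLinearMap_apply, Algebra.TensorProduct.includeLeft_apply,
      Algebra.TensorProduct.includeRight_apply, Algebra.TensorProduct.tmul_mul_tmul,
      one_mul, mul_one]
    exact (r.eq).symm
  have hGdec : G = cv (ι₂ ∘ₗ 𝑺) (ι₁ ∘ₗ 𝑺) := by
    refine LinearMap.ext fun a => ?_
    have r := Coalgebra.Repr.arbitrary k a
    rw [cv_apply _ _ a r]
    simp only [hG, hι₁, hι₂, LinearMap.coe_comp, Function.comp_apply,
      LinearEquiv.coe_coe, AlgHom.toLinearMap_apply,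
      Algebra.TensorProduct.includeLeft_apply, Algebra.TensorProduct.includeRight_apply,
      Algebra.TensorProduct.tmul_mul_tmul, one_mul, mul_one]
    rw [← r.eq]
    simp [map_sum]
  have hcu₂ : ι₂ ∘ₗ (cu : H →ₗ[k] H) = (cu : H →ₗ[k] H ⊗[k] H) := by
    refine LinearMap.ext fun a => ?_
    simp [hι₂, cu, Algebra.linearMap_apply]
    rw [Algebra.algebraMap_eq_smul_one, TensorProduct.tmul_smul, TensorProduct.smul_tmul']
  have hcu₁ : ι₁ ∘ₗ (cu : H →ₗ[k] H) = (cu : H →ₗ[k] H ⊗[k] H) := by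
    refine LinearMap.ext fun a => ?_
    simp [hι₁, cu, Algebra.linearMap_apply]
  have step2 : cv ι₂ (ι₂ ∘ₗ 𝑺) = (cu : H →ₗ[k] H ⊗[k] H) := by
    have := cv_alghom (Algebra.TensorProduct.includeRight (R := k) (A := H) (B := H))
      (LinearMap.id (M := H)) 𝑺
    rw [cv_id_antipode, LinearMap.comp_id] at this
    rw [← hcu₂]
    exact this.symm
  have step1 : cv ι₁ (ι₁ ∘ₗ 𝑺) = (cu : H →ₗ[k] H ⊗[k] H) := by
    have := cv_alghom (Algebra.TensorProduct.includeLeft (R := k) (S := k) (A := H) (B := H))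
      (LinearMap.id (M := H)) 𝑺
    rw [cv_id_antipode, LinearMap.comp_id] at this
    rw [← hcu₁]
    exact this.symm
  have hΔG : cv Δ G = cu := by
    rw [hΔ, hGdec, cv_assoc, ← cv_assoc ι₂, step2, cv_cu_left, step1]
  have hFΔ : cv F Δ = cu := by
    refine LinearMap.ext fun a => ?_
    have r := Coalgebra.Repr.arbitrary k a
    rw [cv_apply _ _ a r, cu_apply]
    have : ∀ i, F (r.left i) * Δ (r.right i)
        = Coalgebra.comul (R := k) (𝑺 (r.left i) * r.right i) := by
      intro i
      simp [hF, Δ]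
    rw [Finset.sum_congr rfl fun i _ => this i, ← map_sum,
      HopfAlgebra.sum_antipode_mul_eq_smul r]
    simp
  calc F = cv F cu := (cv_cu_right F).symm
    _ = cv F (cv Δ G) := by rw [hΔG]
    _ = cv (cv F Δ) G := (cv_assoc _ _ _).symm
    _ = cv cu G := by rw [hFΔ]
    _ = G := cv_cu_left G

lemma comul_antipode_repr (a : H) {ι : Type*} (r : Coalgebra.Repr k a ι) :
    Coalgebra.comul (R := k) (𝑺 a)
      = ∑ i ∈ r.index, (𝑺 (r.right i)) ⊗ₜ[k] (𝑺 (r.left i)) := by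
  have := LinearMap.congr_fun (comul_antipode (k := k) (H := H)) a
  simp only [LinearMap.coe_comp, Function.comp_apply, LinearEquiv.coe_coe] at this
  rw [this, ← r.eq]
  simp [map_sum]

/-- The representation of `comul (S a)` induced by a representation of `comul a`. -/
def reprS {a : H} {ι : Type*} (r : Coalgebra.Repr k a ι) : Coalgebra.Repr k (𝑺 a) ι where
  index := r.index
  left := fun i => 𝑺 (r.right i)
  right := fun i => 𝑺 (r.left i)
  eq := (comul_antipode_repr a r).symm

/-- The representation of `comul (a * b)` induced by representations of `comul a`, `comul b`. -/
def reprMul {a b : H} {ιa ιb : Type*} (ra : Coalgebra.Repr k a ιa) (rb : Coalgebra.Repr k b ιb) :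
    Coalgebra.Repr k (a * b) (ιa × ιb) where
  index := ra.index ×ˢ rb.index
  left := fun p => ra.left p.1 * rb.left p.2
  right := fun p => ra.right p.1 * rb.right p.2
  eq := by
    have : CoalgebraStruct.comul (R := k) (a * b)
        = Coalgebra.comul (R := k) a * Coalgebra.comul (R := k) b :=
      Bialgebra.comul_mul a b
    rw [this, ← ra.eq, ← rb.eq, Finset.sum_mul_sum, Finset.sum_product]
    simp [Algebra.TensorProduct.tmul_mul_tmul]

@[simp] lemma reprS_index {a : H} {ι : Type*} (r : Coalgebra.Repr k a ι) : (reprS r).index = r.index := rfl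
@[simp] lemma reprS_left {a : H} {ι : Type*} (r : Coalgebra.Repr k a ι) (i : ι) :
    (reprS r).left i = 𝑺 (r.right i) := rfl
@[simp] lemma reprS_right {a : H} {ι : Type*} (r : Coalgebra.Repr k a ι) (i : ι) :
    (reprS r).right i = 𝑺 (r.left i) := rfl

@[simp] lemma reprMul_index {a b : H} {ιa ιb : Type*} (ra : Coalgebra.Repr k a ιa) (rb : Coalgebra.Repr k b ιb) :
    (reprMul ra rb).index = ra.index ×ˢ rb.index := rfl
@[simp] lemma reprMul_left {a b : H} {ιa ιb : Type*} (ra : Coalgebra.Repr k a ιa) (rb : Coalgebra.Repr k b ιb) (p) :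
    (reprMul ra rb).left p = ra.left p.1 * rb.left p.2 := rfl
@[simp] lemma reprMul_right {a b : H} {ιa ιb : Type*} (ra : Coalgebra.Repr k a ιa) (rb : Coalgebra.Repr k b ιb) (p) :
    (reprMul ra rb).right p = ra.right p.1 * rb.right p.2 := rfl

lemma int_repr {I : H →ₗ[k] k} (hI : IsLeftIntegral k H I) (a : H) {ι : Type*} (r : Coalgebra.Repr k a ι) :
    ∑ i ∈ r.index, I (r.right i) • r.left i = I a • (1 : H) := by
  have := hI a
  rw [← r.eq] at this
  simpa [map_sum] using this

/-- The bilinear map `p ⊗ q ↦ I (q * w) • (p * u)` as a linear map. -/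
def pairMap (I : H →ₗ[k] k) (u w : H) : H ⊗[k] H →ₗ[k] H :=
  TensorProduct.lift
    (LinearMap.mk₂ k (fun p q => I (q * w) • (p * u))
      (fun p p' q => by rw [add_mul, smul_add])
      (fun c p q => by rw [smul_mul_assoc, smul_comm])
      (fun p q q' => by rw [add_mul, map_add, add_smul])
      (fun c p q => by rw [smul_mul_assoc, map_smul, smul_eq_mul, mul_smul]))

@[simp] lemma pairMap_tmul (I : H →ₗ[k] k) (u w p q : H) :
    pairMap I u w (p ⊗ₜ[k] q) = I (q * w) • (p * u) := rfl

/-- The bilinear map `p ⊗ z ↦ I (w * S p) • (u * z)` as a linear map. -/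
def pairMap₂ (I : H →ₗ[k] k) (u w : H) : H ⊗[k] H →ₗ[k] H :=
  TensorProduct.lift
    (LinearMap.mk₂ k (fun p z => I (w * 𝑺 p) • (u * z))
      (fun p p' z => by rw [map_add, mul_add, map_add, add_smul])
      (fun c p z => by rw [map_smul, mul_smul_comm, map_smul, smul_eq_mul, mul_smul])
      (fun p z z' => by rw [mul_add, smul_add])
      (fun c p z => by rw [mul_smul_comm, smul_comm]))

@[simp] lemma pairMap₂_tmul (I : H →ₗ[k] k) (u w p z : H) :
    pairMap₂ I u w (p ⊗ₜ[k] z) = I (w * 𝑺 p) • (u * z) := rfl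

/-- The key "coassociativity + antipode" identity:
`∑ S(a₁) a₂' ⊗ a₂'' = 1 ⊗ a`. -/
lemma antipode_left_collapse (x : H) {ι : Type*} (rx : Coalgebra.Repr k x ι)
    (rx2 : ∀ i : ι, Coalgebra.Repr k (rx.right i) (H × H)) :
    ∑ i ∈ rx.index, ∑ j ∈ (rx2 i).index,
        (𝑺 (rx.left i) * (rx2 i).left j) ⊗ₜ[k] (rx2 i).right j
      = (1 : H) ⊗ₜ[k] x := by
  have rx1 : ∀ i : ι, Coalgebra.Repr k (rx.left i) (H × H) := fun i => Coalgebra.Repr.arbitrary k _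
  have key := Coalgebra.sum_tmul_tmul_eq rx rx1 rx2
  set Ψ : H ⊗[k] (H ⊗[k] H) →ₗ[k] H ⊗[k] H :=
    (LinearMap.mul' k H ∘ₗ LinearMap.rTensor H 𝑺).rTensor H
      ∘ₗ (TensorProduct.assoc k H H H).symm.toLinearMap with hΨ
  have hΨt : ∀ a b c : H, Ψ (a ⊗ₜ[k] (b ⊗ₜ[k] c)) = (𝑺 a * b) ⊗ₜ[k] c := by
    intro a b c
    simp [hΨ]
  have := congrArg Ψ key
  simp only [map_sum, hΨt] at this
  rw [← this]
  have : ∀ i ∈ rx.index, ∑ j ∈ (rx1 i).index,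
      (𝑺 ((rx1 i).left j) * (rx1 i).right j) ⊗ₜ[k] rx.right i
        = (1 : H) ⊗ₜ[k] (Coalgebra.counit (R := k) (rx.left i) • rx.right i) := by
    intro i _
    rw [← TensorProduct.sum_tmul, HopfAlgebra.sum_antipode_mul_eq_smul (rx1 i),
      TensorProduct.smul_tmul]
  rw [Finset.sum_congr rfl this, ← TensorProduct.tmul_sum, sum_counit_smul_left rx]

/-- The fundamental left-integral identity `∑ y₁ ∫(x y₂) = ∑ S(x₁) ∫(x₂ y)`. -/
lemma star_identity {I : H →ₗ[k] k} (hI : IsLeftIntegral k H I) (x y : H)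
    {ιx ιy : Type*} (rx : Coalgebra.Repr k x ιx) (ry : Coalgebra.Repr k y ιy) :
    ∑ j ∈ ry.index, I (x * ry.right j) • ry.left j
      = ∑ i ∈ rx.index, I (rx.right i * y) • 𝑺 (rx.left i) := by
  have rx2 : ∀ i : ιx, Coalgebra.Repr k (rx.right i) (H × H) := fun i => Coalgebra.Repr.arbitrary k _
  set Φ : H ⊗[k] H →ₗ[k] H := ∑ l ∈ ry.index, pairMap I (ry.left l) (ry.right l) with hΦ
  have hΦt : ∀ p q : H, Φ (p ⊗ₜ[k] q) = ∑ l ∈ ry.index, I (q * ry.right l) • (p * ry.left l) := by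
    intro p q
    simp [hΦ, LinearMap.sum_apply]
  have K := congrArg Φ (antipode_left_collapse x rx rx2)
  simp only [map_sum, hΦt, one_mul] at K
  rw [← K]
  refine Finset.sum_congr rfl fun i _ => ?_
  have expand := int_repr hI (rx.right i * y) (reprMul (rx2 i) ry)
  simp only [reprMul_index, reprMul_left, reprMul_right] at expand
  calc ∑ j ∈ (rx2 i).index, ∑ l ∈ ry.index,
        I ((rx2 i).right j * ry.right l) • (𝑺 (rx.left i) * (rx2 i).left j * ry.left l)
      = 𝑺 (rx.left i) * ∑ p ∈ (rx2 i).index ×ˢ ry.index,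
          I ((rx2 i).right p.1 * ry.right p.2) • ((rx2 i).left p.1 * ry.left p.2) := by
        rw [Finset.mul_sum, Finset.sum_product]
        refine Finset.sum_congr rfl fun j _ => Finset.sum_congr rfl fun l _ => ?_
        rw [mul_smul_comm, mul_assoc]
    _ = 𝑺 (rx.left i) * (I (rx.right i * y) • (1 : H)) := by
          exact congrArg (fun z => 𝑺 (rx.left i) * z) expand
    _ = I (rx.right i * y) • 𝑺 (rx.left i) := by rw [mul_smul_comm, mul_one]

/-- Unfolding `convProd` through a representation of `comul h`. -/
lemma convProd_repr (I : H →ₗ[k] k) (g h : H) {ι : Type*} (rh : Coalgebra.Repr k h ι) :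
    convProd k H I g h = ∑ i ∈ rh.index, I (rh.right i * 𝑺 g) • rh.left i := by
  unfold convProd convMap
  simp only [LinearMap.coe_comp, Function.comp_apply, LinearEquiv.coe_coe,
    TensorProduct.comm_tmul, LinearMap.rTensor_tmul]
  rw [show (Coalgebra.comul (R := k) h : H ⊗[k] H) = ∑ i ∈ rh.index, rh.left i ⊗ₜ[k] rh.right i
    from rh.eq.symm]
  rw [TensorProduct.sum_tmul, map_sum, map_sum, map_sum]
  refine Finset.sum_congr rfl fun i _ => ?_
  simp only [TensorProduct.assoc_tmul, LinearMap.lTensor_tmul, TensorProduct.rid_tmul]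
  rfl

/-- The two forms of the convolution product agree: `h₁ ∫(h₂ S g) = ∫(h S g₁) g₂`. -/
lemma convProd_eq {I : H →ₗ[k] k} (hI : IsLeftIntegral k H I) (g h : H)
    {ι : Type*} (rg : Coalgebra.Repr k g ι) :
    convProd k H I g h = ∑ j ∈ rg.index, I (h * 𝑺 (rg.left j)) • rg.right j := by
  have rh := Coalgebra.Repr.arbitrary k h
  have rg1 : ∀ j : ι, Coalgebra.Repr k (rg.left j) (H × H) := fun j => Coalgebra.Repr.arbitrary k _
  have rg2 : ∀ j : ι, Coalgebra.Repr k (rg.right j) (H × H) := fun j => Coalgebra.Repr.arbitrary k _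
  -- the linear map used to contract the coassociativity identity
  set Θ : H ⊗[k] (H ⊗[k] H) →ₗ[k] H :=
    ∑ i ∈ rh.index, (pairMap₂ I (rh.left i) (rh.right i)
      ∘ₗ LinearMap.lTensor H (LinearMap.mul' k H ∘ₗ LinearMap.rTensor H 𝑺)) with hΘ
  have hΘt : ∀ p q w : H, Θ (p ⊗ₜ[k] (q ⊗ₜ[k] w))
      = ∑ i ∈ rh.index, I (rh.right i * 𝑺 p) • (rh.left i * (𝑺 q * w)) := by
    intro p q w
    simp [hΘ, LinearMap.sum_apply]
  have key := congrArg Θ (Coalgebra.sum_tmul_tmul_eq rg rg1 rg2)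
  simp only [map_sum, hΘt] at key
  -- Evaluate the right-hand side of `key`
  have rhs_eval : ∑ j ∈ rg.index, ∑ m ∈ (rg2 j).index, ∑ i ∈ rh.index,
      I (rh.right i * 𝑺 (rg.left j)) • (rh.left i * (𝑺 ((rg2 j).left m) * (rg2 j).right m))
        = convProd k H I g h := by
    have : ∀ j ∈ rg.index, ∑ m ∈ (rg2 j).index, ∑ i ∈ rh.index,
        I (rh.right i * 𝑺 (rg.left j)) • (rh.left i * (𝑺 ((rg2 j).left m) * (rg2 j).right m))
          = Coalgebra.counit (R := k) (rg.right j)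
              • ∑ i ∈ rh.index, I (rh.right i * 𝑺 (rg.left j)) • rh.left i := by
      intro j _
      rw [Finset.sum_comm]
      rw [Finset.smul_sum]
      refine Finset.sum_congr rfl fun i _ => ?_
      rw [← Finset.smul_sum, ← Finset.mul_sum, HopfAlgebra.sum_antipode_mul_eq_smul (rg2 j)]
      rw [mul_smul_comm, mul_one, smul_comm]
    rw [Finset.sum_congr rfl this]
    have : ∑ j ∈ rg.index, Coalgebra.counit (R := k) (rg.right j)
        • ∑ i ∈ rh.index, I (rh.right i * 𝑺 (rg.left j)) • rh.left i
          = ∑ i ∈ rh.index, I (rh.right i * 𝑺 g) • rh.left i := by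
      have hsw : ∑ j ∈ rg.index, Coalgebra.counit (R := k) (rg.right j)
          • ∑ i ∈ rh.index, I (rh.right i * 𝑺 (rg.left j)) • rh.left i
            = ∑ i ∈ rh.index, ∑ j ∈ rg.index,
                (Coalgebra.counit (R := k) (rg.right j)
                  • I (rh.right i * 𝑺 (rg.left j))) • rh.left i := by
        rw [Finset.sum_comm]
        refine Finset.sum_congr rfl fun j _ => ?_
        rw [Finset.smul_sum]
        refine Finset.sum_congr rfl fun i _ => ?_
        simp [smul_smul]
      rw [hsw]
      refine Finset.sum_congr rfl fun i _ => ?_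
      rw [← Finset.sum_smul]
      congr 1
      have hterm : ∀ j, Coalgebra.counit (R := k) (rg.right j) • I (rh.right i * 𝑺 (rg.left j))
          = (I ∘ₗ LinearMap.mulLeft k (rh.right i) ∘ₗ 𝑺)
              (Coalgebra.counit (R := k) (rg.right j) • rg.left j) := by
        intro j
        simp
      rw [Finset.sum_congr rfl (fun j _ => hterm j), ← map_sum, sum_counit_smul_right rg]
      simp
    rw [this, ← convProd_repr I g h rh]
  -- Evaluate the left-hand side of `key`
  have lhs_eval : ∑ j ∈ rg.index, ∑ m ∈ (rg1 j).index, ∑ i ∈ rh.index,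
      I (rh.right i * 𝑺 ((rg1 j).left m)) • (rh.left i * (𝑺 ((rg1 j).right m) * rg.right j))
        = ∑ j ∈ rg.index, I (h * 𝑺 (rg.left j)) • rg.right j := by
    refine Finset.sum_congr rfl fun j _ => ?_
    have expand := int_repr hI (h * 𝑺 (rg.left j)) (reprMul rh (reprS (rg1 j)))
    simp only [reprMul_index, reprMul_left, reprMul_right, reprS_index, reprS_left,
      reprS_right] at expand
    calc ∑ m ∈ (rg1 j).index, ∑ i ∈ rh.index,
          I (rh.right i * 𝑺 ((rg1 j).left m)) • (rh.left i * (𝑺 ((rg1 j).right m) * rg.right j))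
        = (∑ p ∈ rh.index ×ˢ (rg1 j).index,
            I (rh.right p.1 * 𝑺 ((rg1 j).left p.2))
              • (rh.left p.1 * 𝑺 ((rg1 j).right p.2))) * rg.right j := by
          rw [Finset.sum_product, Finset.sum_comm]
          rw [Finset.sum_mul]
          refine Finset.sum_congr rfl fun m _ => ?_
          rw [Finset.sum_mul]
          refine Finset.sum_congr rfl fun i _ => ?_
          rw [smul_mul_assoc, mul_assoc]
      _ = (I (h * 𝑺 (rg.left j)) • (1 : H)) * rg.right j := by
          exact congrArg (fun z => z * rg.right j) expand
      _ = I (h * 𝑺 (rg.left j)) • rg.right j := by rw [smul_mul_assoc, one_mul]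
  rw [← lhs_eval, key, rhs_eval]

/-- The main scalar identity: `∑ ∫(g S n₁) ∫(h S n₂) = ∫((g * h) S n)`. -/
lemma cv_eq {I : H →ₗ[k] k} (hI : IsLeftIntegral k H I) (g h : H) :
    cv (I ∘ₗ LinearMap.mulLeft k g ∘ₗ 𝑺) (I ∘ₗ LinearMap.mulLeft k h ∘ₗ 𝑺)
      = I ∘ₗ LinearMap.mulLeft k (convProd k H I g h) ∘ₗ 𝑺 := by
  refine LinearMap.ext fun n => ?_
  have rn := Coalgebra.Repr.arbitrary k n
  have rg := Coalgebra.Repr.arbitrary k g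
  have E := star_identity hI g (𝑺 n) rg (reprS rn)
  simp only [reprS_index, reprS_left, reprS_right] at E
  have E' := congrArg (⇑(I ∘ₗ LinearMap.mulLeft k h)) E
  simp only [map_sum, map_smul, smul_eq_mul, LinearMap.coe_comp, Function.comp_apply,
    LinearMap.mulLeft_apply] at E'
  calc cv (I ∘ₗ LinearMap.mulLeft k g ∘ₗ 𝑺) (I ∘ₗ LinearMap.mulLeft k h ∘ₗ 𝑺) n
      = ∑ j ∈ rn.index, I (g * 𝑺 (rn.left j)) * I (h * 𝑺 (rn.right j)) := by
        rw [cv_apply _ _ n rn]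
        simp
    _ = ∑ i ∈ rg.index, I (rg.right i * 𝑺 n) * I (h * 𝑺 (rg.left i)) := E'
    _ = I (convProd k H I g h * 𝑺 n) := by
        rw [convProd_eq hI g h rg, Finset.sum_mul, map_sum]
        refine Finset.sum_congr rfl fun i _ => ?_
        rw [smul_mul_assoc, map_smul, smul_eq_mul, mul_comm]
    _ = (I ∘ₗ LinearMap.mulLeft k (convProd k H I g h) ∘ₗ 𝑺) n := by simp

end HopfLemmas

/-- For a right `H`-comodule `V`, the formula `h ∘ v := v₀ ∫(h S(v₁))` defines a left module
structure over the convolution algebra `(H, *)`: `g ∘ (h ∘ v) = (g * h) ∘ v`. -/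
theorem convActOp_is_module (I : H →ₗ[k] k) (hI : IsLeftIntegral k H I) (hne : I ≠ 0)
    (ρ : M →ₗ[k] M ⊗[k] H) (hρ : IsCoact k H M ρ) :
    ∀ (g h : H) (v : M),
      convActOp k H M I ρ g (convActOp k H M I ρ h v)
        = convActOp k H M I ρ (convProd k H I g h) v := by
  intro g h v
  classical
  obtain ⟨s, hs⟩ := TensorProduct.exists_finset (R := k) (ρ v)
  set fg : H →ₗ[k] k := I ∘ₗ LinearMap.mulLeft k g ∘ₗ HopfAlgebra.antipode (R := k) with hfg
  set fh : H →ₗ[k] k := I ∘ₗ LinearMap.mulLeft k h ∘ₗ HopfAlgebra.antipode (R := k) with hfh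
  set fc : H →ₗ[k] k :=
    I ∘ₗ LinearMap.mulLeft k (convProd k H I g h) ∘ₗ HopfAlgebra.antipode (R := k) with hfc
  have unf : ∀ (x : H) (u : M), convActOp k H M I ρ x u
      = (TensorProduct.rid k M)
          (LinearMap.lTensor M (I ∘ₗ LinearMap.mulLeft k x ∘ₗ HopfAlgebra.antipode (R := k))
            (ρ u)) := fun x u => rfl
  have hact : ∀ (x : H), convActOp k H M I ρ x v
      = ∑ p ∈ s, (I ∘ₗ LinearMap.mulLeft k x ∘ₗ HopfAlgebra.antipode (R := k)) p.2 • p.1 := by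
    intro x
    rw [unf, hs]
    simp [map_sum]
  set Φ : M ⊗[k] (H ⊗[k] H) →ₗ[k] M :=
    (TensorProduct.rid k M).toLinearMap
      ∘ₗ LinearMap.lTensor M (LinearMap.mul' k k ∘ₗ TensorProduct.map fg fh) with hΦ
  have aux : ∀ (t : M ⊗[k] H) (b : H),
      Φ ((TensorProduct.assoc k M H H) (t ⊗ₜ[k] b))
        = fh b • ((TensorProduct.rid k M) (LinearMap.lTensor M fg t)) := by
    intro t b
    induction t using TensorProduct.induction_on with
    | zero => simp
    | tmul m a =>
        simp only [TensorProduct.assoc_tmul, hΦ, LinearMap.coe_comp, Function.comp_apply,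
          LinearEquiv.coe_coe, LinearMap.lTensor_tmul, TensorProduct.map_tmul,
          LinearMap.mul'_apply, TensorProduct.rid_tmul, smul_smul]
        rw [mul_comm]
    | add t1 t2 h1 h2 =>
        rw [TensorProduct.add_tmul, map_add, map_add, h1, h2, map_add, map_add, smul_add]
  have ΦR : ∀ (m : M) (b : H),
      Φ (m ⊗ₜ[k] (Coalgebra.comul (R := k) b)) = (cv fg fh) b • m := by
    intro m b
    simp only [hΦ, LinearMap.coe_comp, Function.comp_apply, LinearEquiv.coe_coe,
      LinearMap.lTensor_tmul]
    rw [TensorProduct.rid_tmul]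
    rfl
  have hco : ∑ p ∈ s, fh p.2 • convActOp k H M I ρ g p.1
      = ∑ p ∈ s, (cv fg fh) p.2 • p.1 := by
    have h1 := LinearMap.congr_fun hρ.1 v
    simp only [LinearMap.coe_comp, Function.comp_apply, LinearEquiv.coe_coe] at h1
    have h2 := congrArg (⇑Φ) h1
    rw [hs] at h2
    simp only [map_sum, LinearMap.rTensor_tmul, LinearMap.lTensor_tmul] at h2
    have h2' : ∑ p ∈ s, fh p.2 • (TensorProduct.rid k M) (LinearMap.lTensor M fg (ρ p.1))
        = ∑ p ∈ s, (cv fg fh) p.2 • p.1 :=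
      (Finset.sum_congr rfl (fun p _ => (aux (ρ p.1) p.2).symm)).trans
        (h2.trans (Finset.sum_congr rfl (fun p _ => ΦR p.1 p.2)))
    calc ∑ p ∈ s, fh p.2 • convActOp k H M I ρ g p.1
        = ∑ p ∈ s, fh p.2 • (TensorProduct.rid k M) (LinearMap.lTensor M fg (ρ p.1)) := by
          refine Finset.sum_congr rfl fun p _ => ?_
          rw [unf]
      _ = ∑ p ∈ s, (cv fg fh) p.2 • p.1 := h2' 
  calc convActOp k H M I ρ g (convActOp k H M I ρ h v)
      = ∑ p ∈ s, fh p.2 • convActOp k H M I ρ g p.1 := by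
        rw [hact h, map_sum]
        exact Finset.sum_congr rfl fun p _ => map_smul _ _ _
    _ = ∑ p ∈ s, (cv fg fh) p.2 • p.1 := hco
    _ = ∑ p ∈ s, fc p.2 • p.1 := by
        rw [hfg, hfh, cv_eq hI g h, ← hfc]
    _ = convActOp k H M I ρ (convProd k H I g h) v := (hact (convProd k H I g h)).symm

end
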